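/- The commutator of the time-like horizontal field and vertical fields vanishes: [D_t, V_{ab}] = 0 on the evolving frame bundle, where D_t = ∂ₜ − (1/2)(∂̃ₜg)_{cd} e_d^l ∂/∂e_c^l and V_{ab} = e_b^j ∂/∂e_a^j − e_a^j ∂/∂e_b^j. -/

import Mathlib

open scoped BigOperators

noncomputable section

/-- Partial derivative `∂ᵢ f` of a function on ℝⁿ (global coordinates). -/
def pd {n : ℕ} (f : (Fin n → ℝ) → ℝ) (i : Fin n) (x : Fin n → ℝ) : ℝ :=
  fderiv ℝ f x (Pi.single i 1)

/-- Christoffel symbols `Γ^l_{ij}` of the metric `g` in coordinates. -/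
def chr {n : ℕ} (g : (Fin n → ℝ) → Matrix (Fin n) (Fin n) ℝ)
    (x : Fin n → ℝ) (l i j : Fin n) : ℝ :=
  (1/2) * ∑ k, (g x)⁻¹ l k *
    (pd (fun y => g y k j) i x + pd (fun y => g y i k) j x - pd (fun y => g y i j) k x)

/-- Covariant Hessian `∇²f` in coordinates. -/
def hess {n : ℕ} (g : (Fin n → ℝ) → Matrix (Fin n) (Fin n) ℝ)
    (f : (Fin n → ℝ) → ℝ) (x : Fin n → ℝ) (i j : Fin n) : ℝ :=
  pd (pd f j) i x - ∑ k, chr g x k i j * pd f k x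

/-- Laplace–Beltrami operator `Δ_g f = g^{ij}∇²_{ij}f`. -/
def lapBel {n : ℕ} (g : (Fin n → ℝ) → Matrix (Fin n) (Fin n) ℝ)
    (f : (Fin n → ℝ) → ℝ) (x : Fin n → ℝ) : ℝ :=
  ∑ i, ∑ j, (g x)⁻¹ i j * hess g f x i j

/-- Squared gradient `|∇f|²_g = g^{ij} ∂ᵢf ∂ⱼf`. -/
def gradSq {n : ℕ} (g : (Fin n → ℝ) → Matrix (Fin n) (Fin n) ℝ)
    (f : (Fin n → ℝ) → ℝ) (x : Fin n → ℝ) : ℝ :=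
  ∑ i, ∑ j, (g x)⁻¹ i j * pd f i x * pd f j x

/-- Inner product of gradients `⟨∇f, ∇h⟩_g`. -/
def innerGrad {n : ℕ} (g : (Fin n → ℝ) → Matrix (Fin n) (Fin n) ℝ)
    (f h : (Fin n → ℝ) → ℝ) (x : Fin n → ℝ) : ℝ :=
  ∑ i, ∑ j, (g x)⁻¹ i j * pd f i x * pd h j x

/-- Squared norm of the Hessian `|∇²f|²_g`. -/
def hessSq {n : ℕ} (g : (Fin n → ℝ) → Matrix (Fin n) (Fin n) ℝ)
    (f : (Fin n → ℝ) → ℝ) (x : Fin n → ℝ) : ℝ :=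
  ∑ i, ∑ j, ∑ k, ∑ l, (g x)⁻¹ i k * (g x)⁻¹ j l * hess g f x i j * hess g f x k l

/-- Ricci curvature `Rc_{jk} = ∂ᵢΓ^i_{jk} − ∂ⱼΓ^i_{ik} + Γ^i_{ip}Γ^p_{jk} − Γ^i_{jp}Γ^p_{ik}`. -/
def ric {n : ℕ} (g : (Fin n → ℝ) → Matrix (Fin n) (Fin n) ℝ)
    (x : Fin n → ℝ) (j k : Fin n) : ℝ :=
  ∑ i, (pd (fun y => chr g y i j k) i x - pd (fun y => chr g y i i k) j x
    + ∑ p, (chr g x i i p * chr g x p j k - chr g x i j p * chr g x p i k))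

/-- The (coordinatized) frame bundle over space-time `M × I`: a point is `(x, t, e)`
with `e a j = e_a^j` the components of the frame `u e_a = e_a^j ∂/∂x^j`,
the fibers over `(x,t)` consisting of `g_t`-orthonormal frames. -/
abbrev STFrame (n : ℕ) := (Fin n → ℝ) × ℝ × (Fin n → Fin n → ℝ)

/-- The lift `(∂̃ₜg)_{ab}(u) = (∂ₜg)(u e_a, u e_b)` of the time derivative of the metric. -/
def tgdot {n : ℕ} (g : (Fin n → ℝ) → ℝ → Matrix (Fin n) (Fin n) ℝ)
    (q : STFrame n) (a b : Fin n) : ℝ :=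
  ∑ j, ∑ k, q.2.2 a j * q.2.2 b k * deriv (fun s => g q.1 s j k) q.2.1

/-- The space-like canonical horizontal vector field
`H_a = e_a^j ∂/∂x^j − e_a^j e_b^k Γ^l_{jk}(g_t) ∂/∂e_b^l` on the evolving frame bundle. -/
def Hft {n : ℕ} (g : (Fin n → ℝ) → ℝ → Matrix (Fin n) (Fin n) ℝ) (a : Fin n)
    (F : STFrame n → ℝ) (q : STFrame n) : ℝ :=
  fderiv ℝ F q
    (fun j => q.2.2 a j, 0,
     fun b l => -∑ j, ∑ k, q.2.2 a j * q.2.2 b k * chr (fun y => g y q.2.1) q.1 l j k)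

/-- The time-like horizontal vector field
`D_t = ∂ₜ − (1/2)(∂̃ₜg)_{ab} e_b^l ∂/∂e_a^l` (horizontal lift of `∂ₜ` for the space-time
connection `∇ₜY = ∂ₜY + (1/2)∂ₜg(Y,·)^♯`). -/
def Dtf {n : ℕ} (g : (Fin n → ℝ) → ℝ → Matrix (Fin n) (Fin n) ℝ)
    (F : STFrame n → ℝ) (q : STFrame n) : ℝ :=
  fderiv ℝ F q
    (0, 1, fun a l => -(1/2) * ∑ b, tgdot g q a b * q.2.2 b l)

/-- The vertical vector field `V_{ab} = e_b^j ∂/∂e_a^j − e_a^j ∂/∂e_b^j`. -/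
def Vft {n : ℕ} (a b : Fin n) (F : STFrame n → ℝ) (q : STFrame n) : ℝ :=
  fderiv ℝ F q
    (0, 0, fun c j => (if c = a then q.2.2 b j else 0) - (if c = b then q.2.2 a j else 0))

/-- The horizontal Laplacian `Δ_H = Σ_a H_a H_a` on the evolving frame bundle. -/
def lapHft {n : ℕ} (g : (Fin n → ℝ) → ℝ → Matrix (Fin n) (Fin n) ℝ)
    (F : STFrame n → ℝ) (q : STFrame n) : ℝ :=
  ∑ a, Hft g a (fun r => Hft g a F r) q


/-! ### Auxiliary machinery for the commutator computation -/

/-- time-partial of `g_jk` as a function on space-time -/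
def Dgt {n : ℕ} (g : (Fin n → ℝ) → ℝ → Matrix (Fin n) (Fin n) ℝ) (j k : Fin n)
    (p : (Fin n → ℝ) × ℝ) : ℝ :=
  fderiv ℝ (fun p : (Fin n → ℝ) × ℝ => g p.1 p.2 j k) p (0, 1)

lemma deriv_eq_Dgt {n : ℕ} (g : (Fin n → ℝ) → ℝ → Matrix (Fin n) (Fin n) ℝ)
    (hg : ∀ i j, ContDiff ℝ (⊤ : ℕ∞) (fun p : (Fin n → ℝ) × ℝ => g p.1 p.2 i j))
    (j k : Fin n) (x : Fin n → ℝ) (t : ℝ) :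
    deriv (fun s => g x s j k) t = Dgt g j k (x, t) := by
  have h : HasFDerivAt (fun p : (Fin n → ℝ) × ℝ => g p.1 p.2 j k)
      (fderiv ℝ (fun p : (Fin n → ℝ) × ℝ => g p.1 p.2 j k) (x, t)) (x, t) :=
    (((hg j k).differentiable (by simp)) (x, t)).hasFDerivAt
  have hline : HasDerivAt (fun s : ℝ => ((x, s) : (Fin n → ℝ) × ℝ)) (0, 1) t :=
    HasDerivAt.prodMk (hasDerivAt_const t x) (hasDerivAt_id t)
  exact (h.comp_hasDerivAt t hline).deriv

/-- frame-coefficient coordinate as a continuous linear map -/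
def ee {n : ℕ} (c j : Fin n) : STFrame n →L[ℝ] ℝ :=
  (ContinuousLinearMap.proj j).comp ((ContinuousLinearMap.proj c).comp
    ((ContinuousLinearMap.snd ℝ ℝ (Fin n → Fin n → ℝ)).comp
      (ContinuousLinearMap.snd ℝ (Fin n → ℝ) (ℝ × (Fin n → Fin n → ℝ)))))

/-- base-point projection as a continuous linear map -/
def bp (n : ℕ) : STFrame n →L[ℝ] (Fin n → ℝ) × ℝ :=
  (ContinuousLinearMap.fst ℝ (Fin n → ℝ) (ℝ × (Fin n → Fin n → ℝ))).prod
    ((ContinuousLinearMap.fst ℝ ℝ (Fin n → Fin n → ℝ)).comp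
      (ContinuousLinearMap.snd ℝ (Fin n → ℝ) (ℝ × (Fin n → Fin n → ℝ))))

/-- the time-like horizontal vector field, written via `Dgt` -/
def Xf {n : ℕ} (g : (Fin n → ℝ) → ℝ → Matrix (Fin n) (Fin n) ℝ) (q : STFrame n) : STFrame n :=
  (0, 1, fun a l =>
    -(1/2) * ∑ c, (∑ j, ∑ k, q.2.2 a j * q.2.2 c k * Dgt g j k (q.1, q.2.1)) * q.2.2 c l)

/-- the vertical vector field as a continuous linear map -/
def Yl {n : ℕ} (a b : Fin n) : STFrame n →L[ℝ] STFrame n :=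
  (0 : STFrame n →L[ℝ] (Fin n → ℝ)).prod ((0 : STFrame n →L[ℝ] ℝ).prod
    (ContinuousLinearMap.pi fun c => ContinuousLinearMap.pi fun j =>
      (if c = a then ee b j else 0) - (if c = b then ee a j else 0)))

lemma Yl_apply {n : ℕ} (a b : Fin n) (q : STFrame n) :
    Yl a b q
      = (0, 0, fun c j => (if c = a then q.2.2 b j else 0) - (if c = b then q.2.2 a j else 0)) := by
  refine Prod.ext rfl (Prod.ext rfl ?_)
  funext c j
  show ((if c = a then ee b j else 0) - (if c = b then ee a j else 0)) q = _
  rw [ContinuousLinearMap.sub_apply]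
  congr 1 <;> split_ifs <;> rfl

lemma contDiff_Xf {n : ℕ} (g : (Fin n → ℝ) → ℝ → Matrix (Fin n) (Fin n) ℝ)
    (hg : ∀ i j, ContDiff ℝ (⊤ : ℕ∞) (fun p : (Fin n → ℝ) × ℝ => g p.1 p.2 i j)) :
    ContDiff ℝ (⊤ : ℕ∞) (Xf g) := by
  have hDgt : ∀ j k : Fin n, ContDiff ℝ (⊤ : ℕ∞) (Dgt g j k) := fun j k =>
    ((hg j k).fderiv_right (by simp)).clm_apply contDiff_const
  refine contDiff_const.prodMk (contDiff_const.prodMk ?_)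
  refine contDiff_pi.2 fun a => contDiff_pi.2 fun l => contDiff_const.mul ?_
  refine ContDiff.sum fun c _ => ContDiff.mul ?_ (ee c l).contDiff
  refine ContDiff.sum fun j _ => ContDiff.sum fun k _ => ?_
  exact ((ee a j).contDiff.mul (ee c k).contDiff).mul ((hDgt j k).comp (bp n).contDiff)

lemma keyAlg {n : ℕ} (E D : Fin n → Fin n → ℝ) (a b a' l : Fin n)
    (W : Fin n → Fin n → ℝ)
    (hW : ∀ c m, W c m = (if c = a then E b m else 0) - (if c = b then E a m else 0)) :
    -(1/2) * ∑ c, ((∑ j, ∑ k, (W a' j * E c k + E a' j * W c k) * D j k) * E c l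
        + (∑ j, ∑ k, E a' j * E c k * D j k) * W c l)
    = (if a' = a then -(1/2) * ∑ c, (∑ j, ∑ k, E b j * E c k * D j k) * E c l else 0)
    - (if a' = b then -(1/2) * ∑ c, (∑ j, ∑ k, E a j * E c k * D j k) * E c l else 0) := by
  have step1 : ∀ c : Fin n,
      (∑ j, ∑ k, (W a' j * E c k + E a' j * W c k) * D j k) * E c l
        + (∑ j, ∑ k, E a' j * E c k * D j k) * W c l
      = ∑ j, ∑ k, (W a' j * E c k * D j k * E c l
          + E a' j * D j k * (W c k * E c l + E c k * W c l)) := by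
    intro c
    rw [Finset.sum_mul, Finset.sum_mul, ← Finset.sum_add_distrib]
    refine Finset.sum_congr rfl fun j _ => ?_
    rw [Finset.sum_mul, Finset.sum_mul, ← Finset.sum_add_distrib]
    refine Finset.sum_congr rfl fun k _ => by ring
  simp only [step1]
  rw [Finset.sum_comm]
  have step2 : ∀ j : Fin n,
      ∑ c, ∑ k, (W a' j * E c k * D j k * E c l
          + E a' j * D j k * (W c k * E c l + E c k * W c l))
      = ∑ k, ∑ c, (W a' j * E c k * D j k * E c l
          + E a' j * D j k * (W c k * E c l + E c k * W c l)) := fun j => Finset.sum_comm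
  simp only [step2]
  have hcol : ∀ j k : Fin n,
      ∑ c, (W a' j * E c k * D j k * E c l
          + E a' j * D j k * (W c k * E c l + E c k * W c l))
      = W a' j * (∑ c, E c k * D j k * E c l) := by
    intro j k
    rw [Finset.sum_add_distrib]
    have h1 : ∑ c, W a' j * E c k * D j k * E c l = W a' j * ∑ c, E c k * D j k * E c l := by
      rw [Finset.mul_sum]; exact Finset.sum_congr rfl fun c _ => by ring
    have h2 : ∑ c, E a' j * D j k * (W c k * E c l + E c k * W c l) = 0 := by
      have : ∑ c, (W c k * E c l + E c k * W c l) = 0 := by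
        simp only [hW, sub_mul, mul_sub, ite_mul, mul_ite, zero_mul, mul_zero,
          Finset.sum_add_distrib, Finset.sum_sub_distrib, Finset.sum_ite_eq',
          Finset.mem_univ, if_true]
        ring
      rw [← Finset.mul_sum, this, mul_zero]
    rw [h1, h2, add_zero]
  simp only [hcol]
  have hswap : ∀ m : Fin n,
      ∑ c, (∑ j, ∑ k, E m j * E c k * D j k) * E c l
      = ∑ j, ∑ k, E m j * ∑ c, E c k * D j k * E c l := by
    intro m
    simp only [Finset.sum_mul]
    rw [Finset.sum_comm]
    refine Finset.sum_congr rfl fun j _ => ?_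
    rw [Finset.sum_comm]
    refine Finset.sum_congr rfl fun k _ => ?_
    rw [Finset.mul_sum]
    exact Finset.sum_congr rfl fun c _ => by ring
  simp only [hW a']
  by_cases ha : a' = a <;> by_cases hb : a' = b <;>
    simp only [ha, hb, if_true, if_false, hswap, sub_zero, zero_sub, sub_self] <;>
    simp [sub_mul, neg_mul, Finset.sum_sub_distrib, Finset.sum_neg_distrib, mul_sub, mul_neg]

lemma fderiv_dir {G H : Type*} [NormedAddCommGroup G] [NormedSpace ℝ G]
    [NormedAddCommGroup H] [NormedSpace ℝ H]
    {f : G → H} {q v : G} {d : H} (hf : DifferentiableAt ℝ f q)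
    (h : HasDerivAt (fun s : ℝ => f (q + s • v)) d 0) :
    fderiv ℝ f q v = d := by
  have hline : HasDerivAt (fun s : ℝ => q + s • v) v 0 := by
    simpa using ((hasDerivAt_id (0:ℝ)).smul_const v).const_add q
  have hfq : HasFDerivAt f (fderiv ℝ f q) (q + (0:ℝ) • v) := by
    simpa using hf.hasFDerivAt
  have h2 : HasDerivAt (fun s : ℝ => f (q + s • v)) (fderiv ℝ f q v) 0 :=
    hfq.comp_hasDerivAt (x := (0:ℝ)) hline
  exact h2.unique h

lemma fderiv_Xf_dir {n : ℕ} (g : (Fin n → ℝ) → ℝ → Matrix (Fin n) (Fin n) ℝ)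
    (hg : ∀ i j, ContDiff ℝ (⊤ : ℕ∞) (fun p : (Fin n → ℝ) × ℝ => g p.1 p.2 i j))
    (a b : Fin n) (q : STFrame n) :
    fderiv ℝ (Xf g) q (Yl a b q) = Yl a b (Xf g q) := by
  set W : Fin n → Fin n → ℝ :=
    fun c m => (if c = a then q.2.2 b m else 0) - (if c = b then q.2.2 a m else 0) with hWdef
  have hYq : Yl a b q = (0, 0, W) := Yl_apply a b q
  apply fderiv_dir (((contDiff_Xf g hg).differentiable (by simp)) q)
  have hfun : (fun s : ℝ => Xf g (q + s • Yl a b q)) =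
      fun s => (((0 : Fin n → ℝ), (1:ℝ), fun a' l => -(1/2) * ∑ c, (∑ j, ∑ k,
        (q.2.2 a' j + s * W a' j) * (q.2.2 c k + s * W c k) * Dgt g j k (q.1, q.2.1))
        * (q.2.2 c l + s * W c l)) : STFrame n) := by
    funext s
    rw [hYq]
    simp [Xf, Prod.fst_add, Prod.snd_add, Prod.smul_fst, Prod.smul_snd, smul_zero,
      add_zero, Pi.add_apply, Pi.smul_apply, smul_eq_mul, mul_zero]
  rw [hfun, Yl_apply a b (Xf g q)]
  refine HasDerivAt.prodMk (hasDerivAt_const _ _) (HasDerivAt.prodMk (hasDerivAt_const _ _)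
    (hasDerivAt_pi.2 fun a' => hasDerivAt_pi.2 fun l => ?_))
  have hlin : ∀ c m : Fin n, HasDerivAt (fun s : ℝ => q.2.2 c m + s * W c m) (W c m) 0 :=
    fun c m => (hasDerivAt_mul_const (W c m)).const_add _
  have hsum : ∀ c : Fin n, HasDerivAt (fun s : ℝ => ∑ j, ∑ k,
      (q.2.2 a' j + s * W a' j) * (q.2.2 c k + s * W c k) * Dgt g j k (q.1, q.2.1))
      (∑ j, ∑ k, (W a' j * q.2.2 c k + q.2.2 a' j * W c k) * Dgt g j k (q.1, q.2.1)) 0 := by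
    intro c
    refine HasDerivAt.fun_sum fun j _ => HasDerivAt.fun_sum fun k _ => ?_
    simpa using ((hlin a' j).fun_mul (hlin c k)).mul_const (Dgt g j k (q.1, q.2.1))
  have hprod : ∀ c : Fin n, HasDerivAt (fun s : ℝ => (∑ j, ∑ k,
      (q.2.2 a' j + s * W a' j) * (q.2.2 c k + s * W c k) * Dgt g j k (q.1, q.2.1))
      * (q.2.2 c l + s * W c l))
      ((∑ j, ∑ k, (W a' j * q.2.2 c k + q.2.2 a' j * W c k) * Dgt g j k (q.1, q.2.1)) * q.2.2 c l
        + (∑ j, ∑ k, q.2.2 a' j * q.2.2 c k * Dgt g j k (q.1, q.2.1)) * W c l) 0 := by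
    intro c
    have := (hsum c).fun_mul (hlin c l)
    simpa [add_comm] using this
  have hmain := (HasDerivAt.fun_sum (u := Finset.univ) fun c _ => hprod c).const_mul (-(1/2) : ℝ)
  have halg := keyAlg q.2.2 (fun j k => Dgt g j k (q.1, q.2.1)) a b a' l W (fun c m => rfl)
  show HasDerivAt _ ((if a' = a then (Xf g q).2.2 b l else 0)
    - (if a' = b then (Xf g q).2.2 a l else 0)) 0
  have hXe : ∀ m : Fin n, (Xf g q).2.2 m l
      = -(1/2) * ∑ c, (∑ j, ∑ k, q.2.2 m j * q.2.2 c k * Dgt g j k (q.1, q.2.1)) * q.2.2 c l :=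
    fun m => rfl
  rw [hXe, hXe, ← halg]
  exact hmain

/-- The commutator of the time-like horizontal field `D_t` and the
vertical fields `V_{ab}` vanishes on the evolving frame bundle: `[D_t, V_{ab}] = 0`,
i.e. `D_t (V_{ab} F) = V_{ab} (D_t F)` for every smooth function `F`. -/
theorem timelike_vertical_commutator_vanishes {n : ℕ}
    (g : (Fin n → ℝ) → ℝ → Matrix (Fin n) (Fin n) ℝ)
    (hg : ∀ i j, ContDiff ℝ (⊤ : ℕ∞) (fun p : (Fin n → ℝ) × ℝ => g p.1 p.2 i j))
    (a b : Fin n) (F : STFrame n → ℝ) (hF : ContDiff ℝ (⊤ : ℕ∞) F) (q : STFrame n) :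
    Dtf g (fun r => Vft a b F r) q = Vft a b (fun r => Dtf g F r) q := by
  have hXv : ∀ r : STFrame n, Xf g r
      = ((0, 1, fun a' l => -(1/2) * ∑ b', tgdot g r a' b' * r.2.2 b' l) : STFrame n) := by
    intro r
    unfold Xf tgdot
    refine Prod.ext rfl (Prod.ext rfl ?_)
    funext a' l
    simp only
    congr 1
    refine Finset.sum_congr rfl fun c _ => ?_
    congr 1
    refine Finset.sum_congr rfl fun j _ => Finset.sum_congr rfl fun k _ => ?_
    rw [deriv_eq_Dgt g hg]
  have hDtf : ∀ (G : STFrame n → ℝ) r, Dtf g G r = fderiv ℝ G r (Xf g r) := by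
    intro G r
    unfold Dtf
    rw [hXv r]
  have hVft : ∀ (G : STFrame n → ℝ) r, Vft a b G r = fderiv ℝ G r (Yl a b r) := by
    intro G r
    unfold Vft
    rw [Yl_apply]
  have hc : ∀ r : STFrame n, DifferentiableAt ℝ (fderiv ℝ F) r :=
    fun r => ((hF.fderiv_right (m := 1) (by exact WithTop.coe_le_coe.2 le_top)).differentiable one_ne_zero) r
  have hXdiff : DifferentiableAt ℝ (Xf g) q := ((contDiff_Xf g hg).differentiable (by simp)) q
  have hYdiff : DifferentiableAt ℝ (fun r : STFrame n => Yl a b r) q :=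
    (Yl a b).differentiable.differentiableAt
  have hL : Dtf g (fun r => Vft a b F r) q
      = fderiv ℝ F q (Yl a b (Xf g q))
        + fderiv ℝ (fderiv ℝ F) q (Xf g q) (Yl a b q) := by
    have h1 : (fun r => Vft a b F r) = fun r => fderiv ℝ F r (Yl a b r) :=
      funext fun r => hVft F r
    rw [hDtf _ q, h1, fderiv_clm_apply (hc q) hYdiff, (Yl a b).fderiv]
    simp [ContinuousLinearMap.add_apply, ContinuousLinearMap.comp_apply,
      ContinuousLinearMap.flip_apply]
  have hR : Vft a b (fun r => Dtf g F r) q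
      = fderiv ℝ F q (fderiv ℝ (Xf g) q (Yl a b q))
        + fderiv ℝ (fderiv ℝ F) q (Yl a b q) (Xf g q) := by
    have h1 : (fun r => Dtf g F r) = fun r => fderiv ℝ F r (Xf g r) :=
      funext fun r => hDtf F r
    rw [hVft _ q, h1, fderiv_clm_apply (hc q) hXdiff]
    simp [ContinuousLinearMap.add_apply, ContinuousLinearMap.comp_apply,
      ContinuousLinearMap.flip_apply]
  have hsym := second_derivative_symmetric (f := F) (f' := fderiv ℝ F)
    (f'' := fderiv ℝ (fderiv ℝ F) q)
    (fun y => ((hF.differentiable (by simp)) y).hasFDerivAt)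
    ((hc q).hasFDerivAt) (Xf g q) (Yl a b q)
  rw [hL, hR, fderiv_Xf_dir g hg a b q, hsym]
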